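/- For any n ≥ 1 and integers a_1,...,a_n ≥ 1, the product of formal Fourier series δ_+^{(a_1)}(x)···δ_+^{(a_n)}(x) equals (-i)^{n-1} Σ_{j=1}^{n-1+Σa_i} C^{a_1,...,a_n}_j δ_+^{(j)}(x), where C^{a_1,...,a_n}_j = (-1)^{(n-1+Σa_i-j)/2} C̃^{a_1,...,a_n}_j if j ≡ n-1+Σa_i (mod 2) and 0 otherwise. -/

import Mathlib

open Polynomial Finset

/-!
`C̃(N) = ∑_{k₁+⋯+kₙ=N} ∏ kᵢ^{aᵢ}` is obtained by repeatedly convolving with `k ↦ k^a`, and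
by the binomial theorem each convolution `∑_{k ≤ N} k^a (N-k)^b` is a combination of `N^l`
times Faulhaber polynomials `(B_{c+1}(N+1) - B_{c+1})/(c+1)`. The reflection
`B_{c+1}(1-x) = (-1)^{c+1} B_{c+1}(x)` makes such a convolution (for `a, b ≥ 1`) a polynomial
of degree `≤ a+b+1` with parity `a+b+1` and vanishing at `0`. Hence `C̃` only has monomials
`N^j` with `1 ≤ j ≤ n-1+∑aᵢ` and `j ≡ n-1+∑aᵢ (mod 2)`. The left side is `i^{∑aᵢ} C̃(N)`,
and for such `j` one has `(-i)^{n-1} (-1)^{(n-1+∑aᵢ-j)/2} i^j = i^{∑aᵢ}`.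
-/

theorem Finset.Nat.sum_antidiagonalTuple_succ {M : Type*} [AddCommMonoid M] (k n : ℕ)
    (f : (Fin (k + 1) → ℕ) → M) :
    ∑ t ∈ Nat.antidiagonalTuple (k + 1) n, f t =
      ∑ p ∈ antidiagonal n, ∑ t ∈ Nat.antidiagonalTuple k p.2, f (Fin.cons p.1 t) := by
  simp only [Finset.sum, Nat.antidiagonalTuple, Multiset.Nat.antidiagonalTuple,
    List.Nat.antidiagonalTuple, Multiset.map_coe, Multiset.sum_coe, List.flatMap_def,
    List.map_flatten, List.sum_flatten, List.map_map]
  change _ = ((List.Nat.antidiagonal n : Multiset (ℕ × ℕ)).map _).sum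
  rw [Multiset.map_coe, Multiset.sum_coe]
  simp only [Function.comp_def, List.map_map]

theorem mod_two_eq_of_neg_one_pow_eq {R : Type*} [Ring R] (h1 : (-1 : R) ≠ 1) {j d : ℕ}
    (h : (-1 : R) ^ j = (-1) ^ d) : j % 2 = d % 2 := by
  have heven : Even (j + d) := (neg_one_pow_eq_one_iff_even h1).mp (by
    rw [pow_add, h, ← pow_add, ← two_mul, pow_mul, neg_one_sq, one_pow])
  rw [Nat.even_add, Nat.even_iff, Nat.even_iff] at heven
  omega

noncomputable def powSum (c : ℕ) : ℚ[X] :=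
  C ((c + 1 : ℚ)⁻¹) *
    ((Polynomial.bernoulli (c + 1)).comp (X + 1) - C (_root_.bernoulli (c + 1)))

theorem powSum_eval_natCast (c N : ℕ) :
    (powSum c).eval (N : ℚ) = ∑ k ∈ range (N + 1), (k : ℚ) ^ c := by
  have h := sum_range_pow_eq_bernoulli_sub (N + 1) c
  push_cast at h
  simp only [powSum, eval_mul, eval_C, eval_sub, eval_comp, eval_add, eval_X, eval_one, ← h]
  field_simp

theorem natDegree_powSum_le (c : ℕ) : (powSum c).natDegree ≤ c + 1 := by
  have hB : (Polynomial.bernoulli (c + 1)).natDegree ≤ c + 1 := by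
    rw [bernoulli_def]
    exact natDegree_sum_le_of_forall_le _ _ fun i hi =>
      (natDegree_monomial_le _).trans (by rw [mem_range] at hi; omega)
  refine (natDegree_C_mul_le _ _).trans ?_
  rw [natDegree_sub_C]
  exact natDegree_comp_le.trans (by rw [← C_1, natDegree_X_add_C, mul_one]; exact hB)

theorem powSum_eval_neg {c : ℕ} (hc : 1 ≤ c) (x : ℚ) :
    (powSum c).eval (-x) = (-1) ^ (c + 1) * ((powSum c).eval x - x ^ c) := by
  have hb : _root_.bernoulli (c + 1) = (-1) ^ (c + 1) * _root_.bernoulli (c + 1) := by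
    rcases Nat.even_or_odd (c + 1) with he | ho
    · rw [he.neg_one_pow, one_mul]
    · rw [bernoulli_eq_zero_of_odd ho (by omega), mul_zero]
  have hrefl := bernoulli_eval_one_sub (c + 1) x
  have hshift := bernoulli_eval_one_add (c + 1) x
  simp only [powSum, eval_mul, eval_C, eval_sub, eval_comp, eval_add, eval_X, eval_one]
  rw [neg_add_eq_sub, hrefl, add_comm x, hshift, Nat.add_sub_cancel]
  push_cast
  field_simp
  linear_combination -hb

def IsParitySupported {R : Type*} [Semiring R] (d : ℕ) (q : R[X]) : Prop :=
  ∀ j, q.coeff j ≠ 0 → 1 ≤ j ∧ j ≤ d ∧ j % 2 = d % 2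

namespace IsParitySupported

variable {R : Type*} [Semiring R] {d : ℕ} {q : R[X]}

theorem mono (hq : IsParitySupported d q) {d' : ℕ} (hle : d ≤ d') (hpar : d % 2 = d' % 2) :
    IsParitySupported d' q := fun j hj => by
  have := hq j hj
  omega

theorem C_mul (hq : IsParitySupported d q) (c : R) : IsParitySupported d (C c * q) :=
  fun j hj => hq j fun h => hj (by rw [coeff_C_mul, h, mul_zero])

theorem sum {ι : Type*} {s : Finset ι} {f : ι → R[X]}
    (hf : ∀ i ∈ s, IsParitySupported d (f i)) :
    IsParitySupported d (∑ i ∈ s, f i) := fun j hj => by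
  rw [finsetSum_coeff] at hj
  obtain ⟨i, hi, hij⟩ := exists_ne_zero_of_sum_ne_zero hj
  exact hf i hi j hij

theorem coeff_eq_zero (hq : IsParitySupported d q) {j : ℕ} (hj : j % 2 ≠ d % 2) :
    q.coeff j = 0 := by
  by_contra h
  exact hj (hq j h).2.2

end IsParitySupported

theorem IsParitySupported.eval_eq_sum_Icc {R : Type*} [CommSemiring R] {d : ℕ} {q : R[X]}
    (hq : IsParitySupported d q) (x : R) : q.eval x = ∑ j ∈ Icc 1 d, q.coeff j * x ^ j := by
  rw [eval_eq_sum, Polynomial.sum]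
  refine sum_subset (fun j hj => ?_) (fun j _ hj => ?_)
  · have := hq j (mem_support_iff.mp hj)
    rw [mem_Icc]
    omega
  · rw [notMem_support_iff.mp hj, zero_mul]

theorem isParitySupported_X_pow {R : Type*} [Semiring R] {a : ℕ} (ha : 1 ≤ a) :
    IsParitySupported a (X ^ a : R[X]) := fun j hj => by
  rw [coeff_X_pow] at hj
  have : j = a := by by_contra h; exact hj (if_neg h)
  omega

theorem isParitySupported_of_eval_neg {d : ℕ} {q : ℚ[X]} (h0 : q.eval 0 = 0)
    (hdeg : q.natDegree ≤ d) (hneg : ∀ x, q.eval (-x) = (-1) ^ d * q.eval x) :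
    IsParitySupported d q := by
  have hcomp : q.comp (C (-1) * X) = C ((-1) ^ d) * q :=
    Polynomial.funext fun x => by simpa using hneg x
  intro j hj
  refine ⟨Nat.one_le_iff_ne_zero.mpr ?_, (le_natDegree_of_ne_zero hj).trans hdeg, ?_⟩
  · rintro rfl
    exact hj (by rw [coeff_zero_eq_eval_zero, h0])
  · have hcoeff := congrArg (coeff · j) hcomp
    simp only [comp_C_mul_X_coeff, coeff_C_mul] at hcoeff
    have hsign : (-1 : ℚ) ^ j = (-1) ^ d := mul_left_cancel₀ hj (by linear_combination hcoeff)
    exact mod_two_eq_of_neg_one_pow_eq (by norm_num) hsign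

noncomputable def sumPowMulPow (a b : ℕ) : ℚ[X] :=
  ∑ l ∈ range (b + 1), C ((-1) ^ (b - l) * (b.choose l : ℚ)) * X ^ l * powSum (a + (b - l))

theorem sumPowMulPow_eval_natCast (a b N : ℕ) :
    (sumPowMulPow a b).eval (N : ℚ) =
      ∑ p ∈ antidiagonal N, (p.1 : ℚ) ^ a * (p.2 : ℚ) ^ b := by
  rw [Nat.sum_antidiagonal_eq_sum_range_succ (fun i j => (i : ℚ) ^ a * (j : ℚ) ^ b)]
  have hbinom : ∀ k ∈ range (N + 1), (k : ℚ) ^ a * ((N - k : ℕ) : ℚ) ^ b =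
      ∑ l ∈ range (b + 1),
        (-1) ^ (b - l) * (b.choose l : ℚ) * (N : ℚ) ^ l * (k : ℚ) ^ (a + (b - l)) := by
    intro k hk
    rw [Nat.cast_sub (by rw [mem_range] at hk; omega), sub_eq_add_neg, add_pow, mul_sum]
    refine sum_congr rfl fun l _ => ?_
    rw [neg_pow, pow_add]
    ring
  simp only [sumPowMulPow, eval_finsetSum, eval_mul, eval_C, eval_pow, eval_X,
    powSum_eval_natCast, mul_sum, sum_congr rfl hbinom]
  exact sum_comm

theorem natDegree_sumPowMulPow_le (a b : ℕ) : (sumPowMulPow a b).natDegree ≤ a + b + 1 := by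
  refine natDegree_sum_le_of_forall_le _ _ fun l hl => ?_
  rw [mem_range] at hl
  refine natDegree_mul_le.trans ?_
  have hpow := natDegree_powSum_le (a + (b - l))
  have hmonomial :=
    (natDegree_C_mul_le ((-1) ^ (b - l) * (b.choose l : ℚ)) _).trans (natDegree_X_pow_le l)
  omega

theorem sumPowMulPow_eval_neg {a b : ℕ} (ha : 1 ≤ a) (hb : 1 ≤ b) (x : ℚ) :
    (sumPowMulPow a b).eval (-x) = (-1) ^ (a + b + 1) * (sumPowMulPow a b).eval x := by
  have hbinom :
      ∑ l ∈ range (b + 1), (-1) ^ (b - l) * (b.choose l : ℚ) * x ^ l * x ^ (a + (b - l)) =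
        x ^ a * (x + -x) ^ b := by
    rw [add_pow, mul_sum]
    refine sum_congr rfl fun l _ => ?_
    rw [neg_pow, pow_add]
    ring
  have hterm : ∀ l ∈ range (b + 1), (-1) ^ (b - l) * (b.choose l : ℚ) * (-x) ^ l *
      (powSum (a + (b - l))).eval (-x) = (-1) ^ (a + b + 1) *
        ((-1) ^ (b - l) * (b.choose l : ℚ) * x ^ l * (powSum (a + (b - l))).eval x -
          (-1) ^ (b - l) * (b.choose l : ℚ) * x ^ l * x ^ (a + (b - l))) := by
    intro l hl
    have hsign : (-1 : ℚ) ^ l * (-1) ^ (a + (b - l) + 1) = (-1) ^ (a + b + 1) := by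
      rw [← pow_add]
      congr 1
      rw [mem_range] at hl
      omega
    rw [neg_pow, powSum_eval_neg (by omega), ← hsign]
    ring
  simp only [sumPowMulPow, eval_finsetSum, eval_mul, eval_C, eval_pow, eval_X]
  rw [sum_congr rfl hterm, ← mul_sum, sum_sub_distrib, hbinom, add_neg_cancel,
    zero_pow (by omega), mul_zero, sub_zero]

theorem isParitySupported_sumPowMulPow {a b : ℕ} (ha : 1 ≤ a) (hb : 1 ≤ b) :
    IsParitySupported (a + b + 1) (sumPowMulPow a b) := by
  refine isParitySupported_of_eval_neg ?_ (natDegree_sumPowMulPow_le a b)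
    (sumPowMulPow_eval_neg ha hb)
  simpa [zero_pow (by omega : a ≠ 0)] using sumPowMulPow_eval_natCast a b 0

noncomputable def sumPowMul (a : ℕ) (g : ℚ[X]) : ℚ[X] :=
  ∑ j ∈ g.support, C (g.coeff j) * sumPowMulPow a j

theorem sumPowMul_eval_natCast (a : ℕ) (g : ℚ[X]) (N : ℕ) :
    (sumPowMul a g).eval (N : ℚ) =
      ∑ p ∈ antidiagonal N, (p.1 : ℚ) ^ a * g.eval (p.2 : ℚ) := by
  simp only [sumPowMul, eval_finsetSum, eval_mul, eval_C, sumPowMulPow_eval_natCast, mul_sum]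
  rw [sum_comm]
  refine sum_congr rfl fun p _ => ?_
  rw [eval_eq_sum, Polynomial.sum, mul_sum]
  exact sum_congr rfl fun j _ => by ring

theorem isParitySupported_sumPowMul {a d : ℕ} {g : ℚ[X]} (ha : 1 ≤ a)
    (hg : IsParitySupported d g) :
    IsParitySupported (a + d + 1) (sumPowMul a g) := by
  refine IsParitySupported.sum fun j hj => IsParitySupported.C_mul ?_ _
  obtain ⟨hj1, hjd, hjpar⟩ := hg j (mem_support_iff.mp hj)
  exact (isParitySupported_sumPowMulPow ha hj1).mono (by omega) (by omega)

noncomputable def tuplePowSum : {m : ℕ} → (Fin (m + 1) → ℕ) → ℚ[X]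
  | 0, a => X ^ a 0
  | _ + 1, a => sumPowMul (a 0) (tuplePowSum (Fin.tail a))

theorem tuplePowSum_eval_natCast {m : ℕ} (a : Fin (m + 1) → ℕ) (N : ℕ) :
    (tuplePowSum a).eval (N : ℚ) =
      ∑ t ∈ Nat.antidiagonalTuple (m + 1) N, ∏ i, (t i : ℚ) ^ a i := by
  induction m generalizing N with
  | zero => simp [tuplePowSum]
  | succ m ih =>
    rw [tuplePowSum, sumPowMul_eval_natCast, Nat.sum_antidiagonalTuple_succ]
    refine sum_congr rfl fun p _ => ?_
    rw [ih, mul_sum]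
    simp [Fin.prod_univ_succ, Fin.tail]

theorem isParitySupported_tuplePowSum {m : ℕ} (a : Fin (m + 1) → ℕ) (ha : ∀ i, 1 ≤ a i) :
    IsParitySupported (m + ∑ i, a i) (tuplePowSum a) := by
  induction m with
  | zero => simpa [tuplePowSum] using isParitySupported_X_pow (R := ℚ) (ha 0)
  | succ m ih =>
    have hsum : ∑ i, a i = a 0 + ∑ i, Fin.tail a i := Fin.sum_univ_succ a
    rw [tuplePowSum, hsum,
      show m + 1 + (a 0 + ∑ i, Fin.tail a i) = a 0 + (m + ∑ i, Fin.tail a i) + 1 by ring]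
    exact isParitySupported_sumPowMul (ha 0) (ih _ fun i => ha i.succ)

theorem neg_I_pow_mul_neg_one_pow_mul_I_pow {m A j : ℕ} (hj : j ≤ m + A)
    (hpar : j % 2 = (m + A) % 2) :
    (-Complex.I) ^ m * ((-1) ^ ((m + A - j) / 2) * Complex.I ^ j) = Complex.I ^ A := by
  have hexp : 3 * m + (2 * ((m + A - j) / 2) + j) = 4 * m + A := by omega
  rw [← Complex.I_pow_three, ← Complex.I_sq, ← pow_mul, ← pow_mul, ← pow_add, ← pow_add, hexp,
    pow_add, pow_mul, Complex.I_pow_four, one_pow, one_mul]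

/-- For `n ≥ 1` and `a₁,...,aₙ ≥ 1`, the product
`δ₊^{(a₁)}(x) ⋯ δ₊^{(aₙ)}(x)` of the formal Fourier series `δ₊^{(s)}(x) = ∑_{k≥0} (ik)^s e^{ikx}`
equals `(-i)^{n-1} ∑_{j=1}^{n-1+∑aᵢ} C_j δ₊^{(j)}(x)`, where
`C_j = (-1)^{(n-1+∑aᵢ-j)/2} C̃_j` if `j ≡ n-1+∑aᵢ (mod 2)` and `0` otherwise,
with `C̃_j` the coefficients of the polynomial `C̃(N) = ∑_{k₁+...+kₙ=N} ∏ kᵢ^{aᵢ}`.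
The identity is stated coefficientwise: the coefficient of `e^{iNx}` on both sides agree
(for `N < 0` both sides vanish trivially). -/
theorem delta_plus_product (n : ℕ) (hn : 1 ≤ n) (a : Fin n → ℕ) (ha : ∀ i, 1 ≤ a i)
    (p : Polynomial ℚ)
    (hp : ∀ N : ℕ, p.eval (N : ℚ) =
        ∑ t ∈ Finset.Nat.antidiagonalTuple n N, ∏ i : Fin n, (t i : ℚ) ^ a i)
    (N : ℕ) :
    ∑ t ∈ Finset.Nat.antidiagonalTuple n N, ∏ i : Fin n, (Complex.I * (t i : ℂ)) ^ a i =
      (-Complex.I) ^ (n - 1) *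
        ∑ j ∈ Finset.Icc 1 (n - 1 + ∑ i, a i),
          (if j % 2 = (n - 1 + ∑ i, a i) % 2
            then (-1 : ℂ) ^ ((n - 1 + ∑ i, a i - j) / 2) * ((p.coeff j : ℚ) : ℂ)
            else 0) * (Complex.I * (N : ℂ)) ^ j := by
  obtain ⟨m, rfl⟩ : ∃ m, n = m + 1 := ⟨n - 1, by omega⟩
  rw [Nat.add_sub_cancel]
  have hpq : p = tuplePowSum a := eq_of_infinite_eval_eq _ _ <|
    Set.infinite_of_injective_forall_mem Nat.cast_injective fun M => by
      simp [hp M, tuplePowSum_eval_natCast]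
  have hsupp : IsParitySupported (m + ∑ i, a i) p := hpq ▸ isParitySupported_tuplePowSum a ha
  have hlhs : ∑ t ∈ Nat.antidiagonalTuple (m + 1) N, ∏ i, (Complex.I * (t i : ℂ)) ^ a i =
      Complex.I ^ (∑ i, a i) * ((p.eval (N : ℚ) : ℚ) : ℂ) := by
    simp only [hp, Rat.cast_sum, Rat.cast_prod, Rat.cast_pow, Rat.cast_natCast, mul_sum, mul_pow,
      prod_mul_distrib, prod_pow_eq_pow_sum]
  rw [hlhs, hsupp.eval_eq_sum_Icc, Rat.cast_sum, mul_sum, mul_sum]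
  refine sum_congr rfl fun j hj => ?_
  split_ifs with hpar
  · rw [← neg_I_pow_mul_neg_one_pow_mul_I_pow (mem_Icc.mp hj).2 hpar]
    push_cast
    ring
  · rw [hsupp.coeff_eq_zero hpar]
    simp
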